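/- arXiv:1405.3141 — 4 statements merged into one kernel-verified Lean document; each statement's English description precedes it below -/
import Mathlib

section
/- Let x_1, ..., x_N be distinct elements of a field and y_1, ..., y_{N-1} arbitrary elements. Then the sum over I of x_I · ∏_{J=1}^{N-1}(x_I - y_J) / ∏_{J ≠ I}(x_I - x_J) equals (∑_I x_I) - (∑_J y_J). -/
open Polynomial Finset

/-- Leading coefficient (degree `card s - 1`) of the Lagrange basis polynomial. -/
lemma basis_coeff_top {K : Type*} [Field K] {ι : Type*} [DecidableEq ι]
    (s : Finset ι) (v : ι → K) (i : ι) (hi : i ∈ s) :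
    (Lagrange.basis s v i).coeff (s.card - 1)
      = (∏ j ∈ s.erase i, (v i - v j))⁻¹ := by
  have h : Lagrange.basis s v i
      = C (∏ j ∈ s.erase i, (v i - v j)⁻¹) * ∏ j ∈ s.erase i, (X - C (v j)) := by
    rw [Lagrange.basis]
    simp_rw [Lagrange.basisDivisor]
    rw [prod_mul_distrib, ← map_prod]
  rw [h, coeff_C_mul]
  have hm : (∏ j ∈ s.erase i, (X - C (v j))).Monic :=
    monic_prod_of_monic _ _ fun j _ => monic_X_sub_C _
  have hd : (∏ j ∈ s.erase i, (X - C (v j))).natDegree = s.card - 1 := by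
    rw [natDegree_prod_of_monic _ _ fun j _ => monic_X_sub_C _]
    simp [card_erase_of_mem hi]
  rw [← hd, ← Polynomial.leadingCoeff, hm.leadingCoeff, mul_one, prod_inv_distrib]

/-- For distinct `x_1, ..., x_N` (`N ≥ 2`) and arbitrary `y_1, ..., y_{N-1}`,
`∑_I x_I ∏_J (x_I - y_J) / ∏_{J ≠ I} (x_I - x_J) = ∑_I x_I - ∑_J y_J`. -/
theorem lagrange_subleading {K : Type*} [Field K] {N : ℕ} (hN : 2 ≤ N)
    (x : Fin N → K) (hx : Function.Injective x) (y : Fin (N - 1) → K) :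
    ∑ I : Fin N, (x I * ∏ J : Fin (N - 1), (x I - y J)) / ∏ J ∈ Finset.univ.erase I, (x I - x J)
      = (∑ I : Fin N, x I) - ∑ J : Fin (N - 1), y J := by
  classical
  set R : K[X] := ∏ J : Fin (N - 1), (X - C (y J)) with hR
  set P : K[X] := X * R with hP
  set nod : K[X] := ∏ I : Fin N, (X - C (x I)) with hnod
  have hRm : R.Monic := monic_prod_of_monic _ _ fun j _ => monic_X_sub_C _
  have hRd : R.natDegree = N - 1 := by
    rw [hR, natDegree_prod_of_monic _ _ fun j _ => monic_X_sub_C _]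
    simp
  have hPm : P.Monic := (monic_X).mul hRm
  have hPd : P.natDegree = N := by
    rw [hP, (monic_X).natDegree_mul hRm, natDegree_X, hRd]; omega
  have hnodm : nod.Monic := monic_prod_of_monic _ _ fun j _ => monic_X_sub_C _
  have hnodd : nod.natDegree = N := by
    rw [hnod, natDegree_prod_of_monic _ _ fun j _ => monic_X_sub_C _]
    simp
  have hinj : Set.InjOn x (Finset.univ : Finset (Fin N)) := fun a _ b _ h => hx h
  have hQdeg : (P - nod).degree < ((Finset.univ : Finset (Fin N)).card : ℕ) := by
    have hdeg : P.degree = nod.degree := by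
      rw [Polynomial.degree_eq_natDegree hPm.ne_zero,
        Polynomial.degree_eq_natDegree hnodm.ne_zero, hPd, hnodd]
    have := Polynomial.degree_sub_lt hdeg hPm.ne_zero
      (hPm.leadingCoeff.trans hnodm.leadingCoeff.symm)
    simpa [Polynomial.degree_eq_natDegree hPm.ne_zero, hPd] using this
  have hQ : P - nod
      = Lagrange.interpolate Finset.univ x (fun I => (P - nod).eval (x I)) :=
    Lagrange.eq_interpolate hinj hQdeg
  have hcoeff := congrArg (fun p : K[X] => p.coeff (N - 1)) hQ
  simp only [Lagrange.interpolate_apply, Polynomial.finset_sum_coeff,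
    coeff_C_mul] at hcoeff
  -- compute LHS coefficient
  have hPc : P.coeff (N - 1) = -∑ J : Fin (N - 1), y J := by
    obtain ⟨m, hm⟩ : ∃ m, N - 1 = m + 1 := ⟨N - 2, by omega⟩
    conv_lhs => rw [hP, hm]
    rw [coeff_X_mul]
    have := prod_X_sub_C_nextCoeff (s := (Finset.univ : Finset (Fin (N - 1)))) y
    rw [Polynomial.nextCoeff_of_natDegree_pos (by rw [hRd]; omega), hRd, ← hR] at this
    rw [show m = N - 1 - 1 by omega]
    exact this
  have hnodc : nod.coeff (N - 1) = -∑ I : Fin N, x I := by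
    have := prod_X_sub_C_nextCoeff (s := (Finset.univ : Finset (Fin N))) x
    rwa [Polynomial.nextCoeff_of_natDegree_pos (by rw [hnodd]; omega), hnodd,
      ← hnod] at this
  rw [Polynomial.coeff_sub, hPc, hnodc] at hcoeff
  -- compute RHS coefficient
  have hbasis : ∀ I : Fin N, (Lagrange.basis Finset.univ x I).coeff (N - 1)
      = (∏ J ∈ Finset.univ.erase I, (x I - x J))⁻¹ := by
    intro I
    have := basis_coeff_top (Finset.univ : Finset (Fin N)) x I (mem_univ I)
    simpa using this
  have heval : ∀ I : Fin N, (P - nod).eval (x I)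
      = x I * ∏ J : Fin (N - 1), (x I - y J) := by
    intro I
    have : nod.eval (x I) = 0 := by
      rw [hnod, eval_prod]
      exact Finset.prod_eq_zero (mem_univ I) (by simp)
    simp [hP, hR, this, eval_prod]
  calc ∑ I : Fin N, (x I * ∏ J : Fin (N - 1), (x I - y J)) /
        ∏ J ∈ Finset.univ.erase I, (x I - x J)
      = ∑ I : Fin N, (P - nod).eval (x I)
          * (Lagrange.basis Finset.univ x I).coeff (N - 1) := by
        refine Finset.sum_congr rfl fun I _ => ?_
        rw [heval I, hbasis I, div_eq_mul_inv]
    _ = _ := by rw [← hcoeff]; ring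
end

section
/- Let x_1, ..., x_N be distinct elements of a field, y_1, ..., y_M arbitrary, and m ≥ 0 an integer with m + 1 + M - N ≥ 0. Then ∑_{I=1}^{N} x_I^m · ∏_{J=1}^{M}(x_I - y_J) / ∏_{J ≠ I}(x_I - x_J) = ∑_{n=0}^{m+1+M-N} e_{m-n+1+M-N}(-y_1, ..., -y_M) · h_n(x_1, ..., x_N), where e_k denotes the k-th elementary symmetric polynomial and h_n the complete homogeneous symmetric polynomial of degree n. -/
open Finset

/-- The `k`-th elementary symmetric polynomial evaluated at `y_1, ..., y_M`. -/
def esymVal {K : Type*} [CommRing K] {M : ℕ} (k : ℕ) (y : Fin M → K) : K :=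
  ∑ s ∈ Finset.powersetCard k (Finset.univ : Finset (Fin M)), ∏ j ∈ s, y j

/-- The complete homogeneous symmetric polynomial of degree `n` evaluated at
`x_1, ..., x_N`: the sum over weakly increasing tuples `i_1 ≤ ... ≤ i_n` of
`x_{i_1} ⋯ x_{i_n}`. -/
def hsymVal {K : Type*} [CommRing K] {N : ℕ} (n : ℕ) (x : Fin N → K) : K :=
  ∑ f ∈ Finset.univ.filter (fun f : Fin n → Fin N => ∀ i j : Fin n, i ≤ j → f i ≤ f j),
    ∏ i : Fin n, x (f i)

/-!
Write `S_N(k; x) = ∑_I x_I^k / ∏_{J ≠ I} (x_I - x_J)`. Splitting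
`x_I^{k+1} = x_I^k (x_I - x_0) + x_0 x_I^k` kills the `I = 0` term of the first part and cancels
the factor `x_I - x_0` elsewhere, so `S_{N+1}(k+1; x) = S_N(k; x_1, …, x_N) + x_0 S_{N+1}(k; x)`.
This is the recursion `h_{n+1}(x) = h_{n+1}(x_1, …, x_N) + x_0 h_n(x)` of the complete
homogeneous polynomials (split the weakly increasing index tuples according to whether they
start at `0`), and for `k < N` the sum `S_N(k; x)` is the coefficient of `X^{N-1}` in the
Lagrange interpolation of `X^k`, i.e. `[k + 1 = N]`. Hence `S_N(k; x) = h_{k+1-N}(x)`, and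
expanding `∏_J (t - y_J) = ∑_k e_k(-y) t^{M-k}` turns the left-hand side into the convolution
on the right.
-/

theorem Fin.monotone_cons_iff {α : Type*} [Preorder α] {n : ℕ} {a : α} {f : Fin n → α} :
    Monotone (Fin.cons a f : Fin (n + 1) → α) ↔ (∀ i, a ≤ f i) ∧ Monotone f := by
  rw [monotone_iff_forall_lt, monotone_iff_forall_lt]
  exact Fin.liftFun_cons (· ≤ ·)

theorem Fin.prod_erase_succ {M : Type*} [CommMonoid M] {N : ℕ} (g : Fin (N + 1) → M)
    (i : Fin N) :
    ∏ J ∈ univ.erase i.succ, g J = g 0 * ∏ j ∈ univ.erase i, g j.succ := by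
  simp only [← filter_ne', prod_filter, Fin.prod_univ_succ, ne_eq, (Fin.succ_ne_zero i).symm,
    not_false_eq_true, if_true, Fin.succ_inj]

theorem sum_range_mul_ite_eq {R : Type*} [CommSemiring R] (a b : ℕ → R) {M : ℕ} (d : ℕ)
    (ha : ∀ k, M < k → a k = 0) :
    ∑ k ∈ range (M + 1), a k * (if k ≤ d then b (d - k) else 0)
      = ∑ n ∈ range (d + 1), a (d - n) * b n := by
  set T : ℕ → R := fun k => a k * if k ≤ d then b (d - k) else 0
  calc ∑ k ∈ range (M + 1), T k = ∑ k ∈ range (M + d + 1), T k :=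
        (eventually_constant_sum (fun k hk => by simp only [T, ha k hk, zero_mul]) (by omega)).symm
    _ = ∑ k ∈ range (d + 1), T k :=
        eventually_constant_sum
          (fun k hk => by simp only [T, if_neg (by omega : ¬ k ≤ d), mul_zero]) (by omega)
    _ = _ := by
        rw [← sum_range_reflect]
        refine sum_congr rfl fun n hn => ?_
        rw [mem_range] at hn
        simp only [T, Nat.add_sub_cancel, if_pos (Nat.sub_le d n),
          Nat.sub_sub_self (Nat.le_of_lt_succ hn)]

section SymmetricValues
variable {R : Type*} [CommRing R]

theorem prod_add_eq_sum_esymVal {M : ℕ} (z : Fin M → R) (t : R) :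
    ∏ j, (z j + t) = ∑ k ∈ range (M + 1), esymVal k z * t ^ (M - k) := by
  rw [prod_add, sum_powerset, card_univ, Fintype.card_fin]
  refine sum_congr rfl fun k _ => ?_
  rw [esymVal, sum_mul]
  refine sum_congr rfl fun s hs => ?_
  rw [mem_powersetCard] at hs
  rw [prod_const, card_univ_sdiff, hs.2, Fintype.card_fin]

theorem esymVal_eq_zero_of_lt {M k : ℕ} (z : Fin M → R) (hk : M < k) : esymVal k z = 0 := by
  rw [esymVal, powersetCard_eq_empty.2 (by simpa using hk), sum_empty]

theorem hsymVal_zero {N : ℕ} (x : Fin N → R) : hsymVal 0 x = 1 := by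
  simp [hsymVal]

theorem hsymVal_succ_fin_zero {n : ℕ} (x : Fin 0 → R) : hsymVal (n + 1) x = 0 := by
  simp [hsymVal]

theorem hsymVal_eq_sum_monotone {N n : ℕ} (x : Fin N → R) :
    hsymVal n x = ∑ f ∈ univ.filter (Monotone : (Fin n → Fin N) → Prop), ∏ i, x (f i) :=
  rfl

theorem sum_monotone_apply_zero_eq_zero {N n : ℕ} (x : Fin (N + 1) → R) :
    ∑ f ∈ univ.filter (fun f : Fin (n + 1) → Fin (N + 1) => Monotone f ∧ f 0 = 0),
        ∏ i, x (f i) = x 0 * hsymVal n x := by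
  rw [hsymVal_eq_sum_monotone, mul_sum]
  symm
  refine sum_nbij' (fun g : Fin n → Fin (N + 1) => (Fin.cons 0 g : Fin (n + 1) → Fin (N + 1)))
    Fin.tail (fun g hg => ?_) (fun f hf => ?_) (fun g _ => ?_) (fun f hf => ?_) (fun g _ => ?_)
  · simp only [mem_filter, mem_univ, true_and] at hg ⊢
    exact ⟨Fin.monotone_cons_iff.2 ⟨fun _ => Fin.zero_le _, hg⟩, Fin.cons_zero _ _⟩
  · simp only [mem_filter, mem_univ, true_and] at hf ⊢
    exact hf.1.comp Fin.strictMono_succ.monotone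
  · exact Fin.tail_cons _ _
  · simp only [mem_filter, mem_univ, true_and] at hf
    rw [← hf.2]
    exact Fin.cons_self_tail f
  · simp [Fin.prod_univ_succ]

theorem sum_monotone_apply_zero_ne_zero {N n : ℕ} (x : Fin (N + 1) → R) :
    ∑ f ∈ univ.filter (fun f : Fin (n + 1) → Fin (N + 1) => Monotone f ∧ f 0 ≠ 0),
        ∏ i, x (f i) = hsymVal (n + 1) (fun i => x i.succ) := by
  rw [hsymVal_eq_sum_monotone]
  symm
  refine sum_nbij (Fin.succ ∘ ·) (fun g hg => ?_) (fun g _ g' _ h => ?_) (fun f hf => ?_)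
    (fun g _ => rfl)
  · simp only [mem_filter, mem_univ, true_and] at hg ⊢
    exact ⟨Fin.strictMono_succ.monotone.comp hg, Fin.succ_ne_zero _⟩
  · exact funext fun i => Fin.succ_injective _ (congrFun h i)
  · simp only [mem_coe, mem_filter, mem_univ, true_and] at hf
    have hne : ∀ i, f i ≠ 0 := fun i => Fin.pos_iff_ne_zero.1
      ((Fin.pos_iff_ne_zero.2 hf.2).trans_le (hf.1 (Fin.zero_le i)))
    exact ⟨fun i => (f i).pred (hne i), by simpa using Fin.monotone_pred_comp hne hf.1,
      funext fun i => Fin.succ_pred _ _⟩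

theorem hsymVal_succ {N n : ℕ} (x : Fin (N + 1) → R) :
    hsymVal (n + 1) x = x 0 * hsymVal n x + hsymVal (n + 1) (fun i => x i.succ) := by
  rw [← sum_monotone_apply_zero_eq_zero, ← sum_monotone_apply_zero_ne_zero,
    hsymVal_eq_sum_monotone, ← sum_filter_add_sum_filter_not _ (fun f => f 0 = 0),
    filter_filter, filter_filter]

end SymmetricValues

section DividedDifferences
variable {K : Type*} [Field K]
open Polynomial

theorem sum_pow_div_prod_sub_of_lt {N : ℕ} {x : Fin N → K} (hx : Function.Injective x) {k : ℕ}
    (hk : k < N) :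
    ∑ I, x I ^ k / ∏ J ∈ univ.erase I, (x I - x J) = if k + 1 = N then 1 else 0 := by
  have hdeg : (X ^ k : K[X]).degree < (#(univ : Finset (Fin N)) : ℕ) := by
    simpa using hk
  have hcoeff := Lagrange.coeff_eq_sum hx.injOn hdeg
  simp only [coeff_X_pow, card_univ, Fintype.card_fin, eval_pow, eval_X] at hcoeff
  rw [← hcoeff]
  exact if_congr (by omega) rfl rfl

theorem sum_pow_succ_div_prod_sub {N : ℕ} {x : Fin (N + 1) → K} (hx : Function.Injective x)
    (k : ℕ) :
    ∑ I, x I ^ (k + 1) / ∏ J ∈ univ.erase I, (x I - x J)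
      = ∑ i : Fin N, x i.succ ^ k / ∏ j ∈ univ.erase i, (x i.succ - x j.succ)
        + x 0 * ∑ I, x I ^ k / ∏ J ∈ univ.erase I, (x I - x J) := by
  have hsplit : ∀ I, x I ^ (k + 1) / ∏ J ∈ univ.erase I, (x I - x J)
      = x I ^ k * (x I - x 0) / ∏ J ∈ univ.erase I, (x I - x J)
        + x 0 * (x I ^ k / ∏ J ∈ univ.erase I, (x I - x J)) := fun I => by ring
  rw [sum_congr rfl fun I _ => hsplit I, sum_add_distrib, ← mul_sum, Fin.sum_univ_succ, sub_self,
    mul_zero, zero_div, zero_add]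
  congr 1
  refine sum_congr rfl fun i _ => ?_
  have hne : x i.succ - x 0 ≠ 0 := sub_ne_zero.2 (hx.ne (Fin.succ_ne_zero i))
  rw [Fin.prod_erase_succ, mul_comm (x i.succ ^ k), mul_div_mul_left _ _ hne]

theorem sum_pow_div_prod_sub_eq_hsymVal {N : ℕ} {x : Fin N → K} (hx : Function.Injective x)
    (k : ℕ) :
    ∑ I, x I ^ k / ∏ J ∈ univ.erase I, (x I - x J)
      = if N ≤ k + 1 then hsymVal (k + 1 - N) x else 0 := by
  induction k generalizing N with
  | zero =>
    cases N with
    | zero => simp [hsymVal_succ_fin_zero]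
    | succ N =>
      rw [sum_pow_div_prod_sub_of_lt hx N.succ_pos]
      split_ifs <;> first | omega | simp [hsymVal_zero]
  | succ k ih =>
    cases N with
    | zero => simp [hsymVal_succ_fin_zero]
    | succ N =>
      rw [sum_pow_succ_div_prod_sub hx, ih hx,
        ih (x := fun i => x i.succ) (hx.comp (Fin.succ_injective N))]
      rcases lt_trichotomy N (k + 1) with hlt | rfl | hgt
      · obtain ⟨d, rfl⟩ := Nat.exists_eq_add_of_le (Nat.le_of_lt_succ hlt)
        simp only [show N + d + 1 + 1 - (N + 1) = d + 1 by omega,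
          show N + d + 1 - (N + 1) = d by omega, show N + d + 1 - N = d + 1 by omega,
          if_pos (by omega : N ≤ N + d + 1), if_pos (by omega : N + 1 ≤ N + d + 1),
          if_pos (by omega : N + 1 ≤ N + d + 1 + 1), hsymVal_succ]
        ring
      · simp [hsymVal_zero]
      · simp only [if_neg (by omega : ¬ N ≤ k + 1), if_neg (by omega : ¬ N + 1 ≤ k + 1),
          if_neg (by omega : ¬ N + 1 ≤ k + 1 + 1), mul_zero, add_zero]

end DividedDifferences

theorem lagrange_summation_formula_general {K : Type*} [Field K] {N M : ℕ}
    (x : Fin N → K) (hx : Function.Injective x) (y : Fin M → K)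
    (m : ℕ) (h : N ≤ m + 1 + M) :
    ∑ I : Fin N, (x I ^ m * ∏ J : Fin M, (x I - y J)) / ∏ J ∈ Finset.univ.erase I, (x I - x J)
      = ∑ n ∈ Finset.range (m + 1 + M - N + 1),
          esymVal (m + 1 + M - N - n) (fun j => -y j) * hsymVal n x := by
  set d := m + 1 + M - N
  have hnum : ∀ I, x I ^ m * ∏ J, (x I - y J)
      = ∑ k ∈ range (M + 1), esymVal k (fun j => -y j) * x I ^ (m + (M - k)) := fun I => by
    simp_rw [← neg_add_eq_sub, prod_add_eq_sum_esymVal, mul_sum, pow_add, mul_left_comm]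
  have hpow : ∀ k ∈ range (M + 1),
      ∑ I, x I ^ (m + (M - k)) / ∏ J ∈ univ.erase I, (x I - x J)
        = if k ≤ d then hsymVal (d - k) x else 0 := fun k hk => by
    rw [mem_range] at hk
    rw [sum_pow_div_prod_sub_eq_hsymVal hx]
    exact if_congr (by omega) (by congr 1; omega) rfl
  calc _ = ∑ k ∈ range (M + 1), esymVal k (fun j => -y j)
          * ∑ I, x I ^ (m + (M - k)) / ∏ J ∈ univ.erase I, (x I - x J) := by
        simp_rw [hnum, sum_div, mul_div_assoc, mul_sum]
        exact sum_comm
    _ = ∑ k ∈ range (M + 1),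
          esymVal k (fun j => -y j) * if k ≤ d then hsymVal (d - k) x else 0 :=
        sum_congr rfl fun k hk => by rw [hpow k hk]
    _ = _ := sum_range_mul_ite_eq (fun k => esymVal k fun j => -y j) (fun n => hsymVal n x) d
          fun k hk => esymVal_eq_zero_of_lt _ hk

/-- Key summation formula: for distinct `x_1, ..., x_N`, arbitrary `y_1, ..., y_M`,
and `m ≥ 0` with `m + 1 + M - N ≥ 0`,
`∑_I x_I^m ∏_J (x_I - y_J) / ∏_{J ≠ I} (x_I - x_J)
   = ∑_{n=0}^{m+1+M-N} e_{m-n+1+M-N}(-y) · h_n(x)`. -/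
theorem lagrange_summation_formula {K : Type*} [Field K] [CharZero K] {N M : ℕ}
    (x : Fin N → K) (hx : Function.Injective x) (y : Fin M → K)
    (m : ℕ) (h : N ≤ m + 1 + M) :
    ∑ I : Fin N, (x I ^ m * ∏ J : Fin M, (x I - y J)) / ∏ J ∈ Finset.univ.erase I, (x I - x J)
      = ∑ n ∈ Finset.range (m + 1 + M - N + 1),
          esymVal (m + 1 + M - N - n) (fun j => -y j) * hsymVal n x :=
  lagrange_summation_formula_general x hx y m h
end

section
/- For N distinct elements x_1,...,x_N of a field and m ≥ N-1, the sum ∑_{I=1}^{N} x_I^m / ∏_{J ≠ I}(x_I - x_J) equals the complete homogeneous symmetric polynomial h_{m-N+1}(x_1,...,x_N). -/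
/-! `∏_J (1 - x_J t)⁻¹ = ∑_n h_n t ^ n`, because a monotone tuple is determined by how often it
takes each value. Reversing the coefficients of the Lagrange interpolation formula for
`X ^ (N - 1)` gives the partial fraction decomposition
`∏_J (1 - x_J t)⁻¹ = ∑_I c_I (1 - x_I t)⁻¹` with `c_I = x_I ^ (N - 1) / ∏_{J ≠ I} (x_I - x_J)`;
comparing the coefficients of `t ^ (m + 1 - N)` gives the identity. -/

open Finset

theorem Monotone.eq_of_ofFn_perm {α : Type*} [PartialOrder α] {n : ℕ} {f g : Fin n → α}
    (hf : Monotone f) (hg : Monotone g) (h : (List.ofFn f).Perm (List.ofFn g)) : f = g :=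
  List.ofFn_injective (h.eq_of_pairwise' hf.sortedLE_ofFn.pairwise hg.sortedLE_ofFn.pairwise)

theorem Multiset.exists_monotone_ofFn_eq {α : Type*} [LinearOrder α] {n : ℕ} (s : Multiset α)
    (hs : Multiset.card s = n) : ∃ f : Fin n → α, Monotone f ∧ (List.ofFn f : Multiset α) = s := by
  set L := s.sort (· ≤ ·)
  have hL : L.length = n := by rw [Multiset.length_sort, hs]
  exact hL ▸ ⟨L.get, (s.pairwise_sort _).sortedLE.monotone_get, by
    rw [List.ofFn_get, Multiset.sort_eq]⟩

theorem hsymVal_eq_sum_finsuppAntidiag {R : Type*} [CommRing R] {N : ℕ} (n : ℕ) (x : Fin N → R) :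
    hsymVal n x = ∑ l ∈ finsuppAntidiag univ n, ∏ J, x J ^ l J := by
  classical
  let toCounts (f : Fin n → Fin N) : Fin N →₀ ℕ := Multiset.toFinsupp (List.ofFn f)
  have mem_monotone {f : Fin n → Fin N} :
      f ∈ univ.filter (fun f : Fin n → Fin N => ∀ i j : Fin n, i ≤ j → f i ≤ f j) ↔ Monotone f := by
    simp [Monotone]
  refine sum_nbij toCounts (fun f _ => ?_) (fun f hf g hg hfg => ?_) (fun l hl => ?_)
    (fun f _ => ?_)
  · rw [mem_finsuppAntidiag]
    refine ⟨?_, subset_univ _⟩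
    show ∑ J : Fin N, Multiset.count J (List.ofFn f : Multiset (Fin N)) = n
    rw [Multiset.sum_count_eq_card fun J _ => mem_univ J, Multiset.coe_card, List.length_ofFn]
  · exact (mem_monotone.1 hf).eq_of_ofFn_perm (mem_monotone.1 hg)
      (Multiset.coe_eq_coe.1 (Multiset.toFinsupp.injective hfg))
  · have hcard : Multiset.card (Finsupp.toMultiset l) = n := by
      simpa [Finsupp.card_toMultiset, Finsupp.sum_fintype] using (mem_finsuppAntidiag.1 hl).1
    obtain ⟨f, hf, hfl⟩ := (Finsupp.toMultiset l).exists_monotone_ofFn_eq hcard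
    exact ⟨f, mem_monotone.2 hf, by simp [toCounts, hfl]⟩
  · show ∏ i, x (f i) = ∏ J, x J ^ Multiset.count J (List.ofFn f : Multiset (Fin N))
    rw [show ∏ i, x (f i) = ((univ.val.map f).map x).prod by rw [Multiset.map_map]; rfl,
      prod_multiset_map_count, Fin.univ_val_map]
    exact prod_subset (subset_univ _) fun J _ hJ => by simp_all

namespace Polynomial

theorem reflect_sum {R ι : Type*} [Semiring R] (s : Finset ι) (f : ι → R[X]) (N : ℕ) :
    reflect N (∑ i ∈ s, f i) = ∑ i ∈ s, reflect N (f i) :=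
  map_sum (⟨⟨reflect N, reflect_zero⟩, fun f g => reflect_add f g N⟩ : R[X] →+ R[X]) f s

theorem reflect_prod_X_sub_C {R ι : Type*} [CommRing R] (s : Finset ι) (x : ι → R) :
    reflect #s (∏ j ∈ s, (X - C (x j))) = ∏ j ∈ s, (1 - C (x j) * X) := by
  classical
  induction s using Finset.cons_induction with
  | empty => simp [reflect_one]
  | cons a s ha ih =>
    have hdeg : (∏ j ∈ s, (X - C (x j))).natDegree ≤ #s :=
      (natDegree_prod_le s _).trans (by simpa using Nat.mul_le_mul_left #s natDegree_X_le)
    rw [prod_cons, card_cons, prod_cons, add_comm,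
      reflect_mul _ _ (natDegree_X_sub_C_le (x a)) hdeg, reflect_sub, reflect_one_X, reflect_C, ih]
    ring

variable {K ι : Type*} [Field K] [DecidableEq ι] {s : Finset ι} {x : ι → K}

theorem sum_C_mul_prod_erase_X_sub_C (hx : Set.InjOn x s) (hs : s.Nonempty) :
    ∑ i ∈ s, C (x i ^ (#s - 1) / ∏ j ∈ s.erase i, (x i - x j)) * ∏ j ∈ s.erase i, (X - C (x j))
      = X ^ (#s - 1) := by
  have hdeg : (X ^ (#s - 1) : K[X]).degree < #s := by
    rw [degree_X_pow]; exact_mod_cast Nat.sub_lt hs.card_pos one_pos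
  rw [Lagrange.eq_interpolate hx hdeg, Lagrange.interpolate_apply]
  refine sum_congr rfl fun i _ => ?_
  simp only [Lagrange.basis, Lagrange.basisDivisor, eval_pow, eval_X, prod_mul_distrib,
    ← map_prod, prod_inv_distrib, div_eq_mul_inv, C_mul]
  ring

theorem sum_C_mul_prod_erase_one_sub_C_mul_X (hx : Set.InjOn x s) (hs : s.Nonempty) :
    ∑ i ∈ s, C (x i ^ (#s - 1) / ∏ j ∈ s.erase i, (x i - x j)) * ∏ j ∈ s.erase i, (1 - C (x j) * X)
      = 1 := by
  have h := congrArg (reflect (#s - 1)) (sum_C_mul_prod_erase_X_sub_C hx hs)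
  rw [reflect_monomial, revAt_le le_rfl, Nat.sub_self, pow_zero, reflect_sum] at h
  refine (sum_congr rfl fun i hi => ?_).trans h
  rw [reflect_C_mul, ← card_erase_of_mem hi, reflect_prod_X_sub_C]

end Polynomial

namespace PowerSeries

theorem one_sub_C_mul_X_mul_mk_pow {R : Type*} [CommRing R] (a : R) :
    (1 - C a * X) * mk (fun n => a ^ n) = 1 := by
  simpa [rescale_mk, rescale_X, mul_comm] using congrArg (rescale a) (mk_one_mul_one_sub_eq_one R)

theorem coeff_prod_mk_pow {R : Type*} [CommRing R] {N : ℕ} (x : Fin N → R) (n : ℕ) :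
    coeff n (∏ J, mk fun k => x J ^ k) = hsymVal n x := by
  classical
  simp only [coeff_prod, coeff_mk, hsymVal_eq_sum_finsuppAntidiag]

theorem prod_mk_pow_eq_sum {K ι : Type*} [Field K] [DecidableEq ι] {s : Finset ι} {x : ι → K}
    (hx : Set.InjOn x s) (hs : s.Nonempty) :
    ∏ j ∈ s, mk (fun k => x j ^ k)
      = ∑ i ∈ s, C (x i ^ (#s - 1) / ∏ j ∈ s.erase i, (x i - x j)) * mk (fun k => x i ^ k) := by
  have h := congrArg Polynomial.coeToPowerSeries.ringHom
    (Polynomial.sum_C_mul_prod_erase_one_sub_C_mul_X hx hs)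
  simp only [map_sum, map_mul, map_prod, map_sub, map_one,
    Polynomial.coeToPowerSeries.ringHom_apply, Polynomial.coe_C, Polynomial.coe_X] at h
  rw [← one_mul (∏ j ∈ s, _), ← h, sum_mul]
  refine sum_congr rfl fun i hi => ?_
  rw [← mul_prod_erase s _ hi, mul_mul_mul_comm, ← prod_mul_distrib,
    prod_congr rfl fun j _ => one_sub_C_mul_X_mul_mk_pow (x j), prod_const_one, mul_one]

end PowerSeries

theorem lagrange_power_sum_complete_homogeneous_general {K : Type*} [Field K] {N : ℕ}
    (x : Fin N → K) (hx : Function.Injective x) (m : ℕ) (hm : N ≤ m + 1) :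
    ∑ I : Fin N, x I ^ m / ∏ J ∈ Finset.univ.erase I, (x I - x J)
      = hsymVal (m + 1 - N) x := by
  rw [← PowerSeries.coeff_prod_mk_pow]
  rcases N.eq_zero_or_pos with rfl | hN
  · simp
  · rw [PowerSeries.prod_mk_pow_eq_sum hx.injOn (univ_nonempty_iff.2 ⟨⟨0, hN⟩⟩), map_sum,
      card_fin]
    refine sum_congr rfl fun I _ => ?_
    rw [PowerSeries.coeff_C_mul, PowerSeries.coeff_mk, div_mul_eq_mul_div, ← pow_add]
    congr 2
    omega

/-- For `N` distinct elements of a field of characteristic zero and `m ≥ N - 1`,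
`∑_I x_I^m / ∏_{J ≠ I} (x_I - x_J) = h_{m - N + 1}(x_1, ..., x_N)`. -/
theorem lagrange_power_sum_complete_homogeneous {K : Type*} [Field K] [CharZero K] {N : ℕ}
    (x : Fin N → K) (hx : Function.Injective x) (m : ℕ) (hm : N ≤ m + 1) :
    ∑ I : Fin N, x I ^ m / ∏ J ∈ Finset.univ.erase I, (x I - x J)
      = hsymVal (m + 1 - N) x :=
  lagrange_power_sum_complete_homogeneous_general x hx m hm
end

section
/- Let Y be a Young diagram and Y^{(k,+)} the diagram obtained by adding a box at the k-th addable corner (r_{k-1}+1, s_k+1). Then A_t(Y^{(k,+)}) = A_t(Y) for t ≤ k-1, A_k(Y^{(k,+)}) = A_k(Y) - 1, A_{k+1}(Y^{(k,+)}) = A_k(Y) + β, A_t(Y^{(k,+)}) = A_{t-1}(Y) for t ≥ k+2; and B_t(Y^{(k,+)}) = B_t(Y) for t ≤ k-1, B_k(Y^{(k,+)}) = A_k(Y), B_t(Y^{(k,+)}) = B_{t-1}(Y) for t ≥ k+1 (in the generic case where adding the box creates a new rectangle). -/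
/-- `A_t = β r_{t-1} - s_t - ξ` with `ξ = 1 - β`, from rectangle data `(r, s)`. -/
def Aval {K : Type*} [Field K] (β : K) (r s : ℕ → ℕ) (t : ℕ) : K :=
  β * (r (t - 1) : K) - (s t : K) - (1 - β)

/-- `B_t = β r_t - s_t` from rectangle data `(r, s)`. -/
def Bval {K : Type*} [Field K] (β : K) (r s : ℕ → ℕ) (t : ℕ) : K :=
  β * (r t : K) - (s t : K)

/-- Transformation of the addable/removable corner data under addition of a box at the
`k`-th addable corner `(r_{k-1}+1, s_k+1)`, in the generic case where the added box
creates a new rectangle.  The new rectangle data `(r', s')` of `Y^{(k,+)}` inserts the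
new column group, and the values transform as:
`A_t(Y^{(k,+)}) = A_t(Y)` for `t ≤ k-1`, `A_k(Y^{(k,+)}) = A_k(Y) - 1`,
`A_{k+1}(Y^{(k,+)}) = A_k(Y) + β`, `A_t(Y^{(k,+)}) = A_{t-1}(Y)` for `t ≥ k+2`;
`B_t(Y^{(k,+)}) = B_t(Y)` for `t ≤ k-1`, `B_k(Y^{(k,+)}) = A_k(Y)`,
`B_t(Y^{(k,+)}) = B_{t-1}(Y)` for `t ≥ k+1`. -/
theorem young_add_box_data {K : Type*} [Field K] (β : K) (f k : ℕ) (r s : ℕ → ℕ)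
    (hk1 : 1 ≤ k) (hkf : k ≤ f + 1) (hr0 : r 0 = 0) (hsf : s (f + 1) = 0)
    (r' s' : ℕ → ℕ)
    (hr' : ∀ t, r' t = if t ≤ k - 1 then r t
        else if t = k then r (k - 1) + 1 else r (t - 1))
    (hs' : ∀ t, s' t = if t ≤ k - 1 then s t
        else if t = k then s k + 1 else s (t - 1)) :
    (∀ t, 1 ≤ t → t ≤ k - 1 → Aval β r' s' t = Aval β r s t) ∧
    Aval β r' s' k = Aval β r s k - 1 ∧
    Aval β r' s' (k + 1) = Aval β r s k + β ∧
    (∀ t, k + 2 ≤ t → t ≤ f + 2 → Aval β r' s' t = Aval β r s (t - 1)) ∧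
    (∀ t, 1 ≤ t → t ≤ k - 1 → Bval β r' s' t = Bval β r s t) ∧
    Bval β r' s' k = Aval β r s k ∧
    (∀ t, k + 1 ≤ t → t ≤ f + 1 → Bval β r' s' t = Bval β r s (t - 1)) := by
  refine ⟨?_, ?_, ?_, ?_, ?_, ?_, ?_⟩
  · intro t h1 h2
    have e1 : r' (t - 1) = r (t - 1) := by rw [hr', if_pos (by omega)]
    have e2 : s' t = s t := by rw [hs', if_pos (by omega)]
    simp [Aval, e1, e2]
  · have e1 : r' (k - 1) = r (k - 1) := by rw [hr', if_pos (by omega)]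
    have e2 : s' k = s k + 1 := by rw [hs', if_neg (by omega), if_pos rfl]
    simp only [Aval, e1, e2]; push_cast; ring
  · have e1 : r' (k + 1 - 1) = r (k - 1) + 1 := by
      simp only [Nat.add_sub_cancel]; rw [hr', if_neg (by omega), if_pos rfl]
    have e2 : s' (k + 1) = s k := by
      rw [hs', if_neg (by omega), if_neg (by omega)]
      simp
    simp only [Aval, e1, e2]; push_cast; ring
  · intro t h1 h2
    have e1 : r' (t - 1) = r (t - 1 - 1) := by
      rw [hr', if_neg (by omega), if_neg (by omega)]
    have e2 : s' t = s (t - 1) := by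
      rw [hs', if_neg (by omega), if_neg (by omega)]
    simp [Aval, e1, e2]
  · intro t h1 h2
    have e1 : r' t = r t := by rw [hr', if_pos (by omega)]
    have e2 : s' t = s t := by rw [hs', if_pos (by omega)]
    simp [Bval, e1, e2]
  · have e1 : r' k = r (k - 1) + 1 := by rw [hr', if_neg (by omega), if_pos rfl]
    have e2 : s' k = s k + 1 := by rw [hs', if_neg (by omega), if_pos rfl]
    simp only [Bval, Aval, e1, e2]; push_cast; ring
  · intro t h1 h2
    have e1 : r' t = r (t - 1) := by rw [hr', if_neg (by omega), if_neg (by omega)]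
    have e2 : s' t = s (t - 1) := by rw [hs', if_neg (by omega), if_neg (by omega)]
    simp [Bval, e1, e2]
end
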